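/- Let α ∈ (0,1), Δ > 0, m ∈ ℝ, and set β = ln((2−α)/α). Then (1/Δ)·∫_{m−Δ/2}^{m+Δ/2} (β/(2(1−α)))²·sech⁴(β·(x − m)/Δ) dx = β·(3 − (1−α)²)/(6(1−α)). Consequently, the variance of the DSQ gradient surrogate under a uniformly distributed input over one quantization interval equals β·(3 − (1−α)²)/(6(1−α)) − 1. -/

import Mathlib

/-!
Substituting `u = β (x - m) / Δ` turns both moments into integrals of `sech²` and `sech⁴` over
`[-β/2, β/2]`, with antiderivatives `tanh` and `tanh - tanh³ / 3`. Since `β / 2 = artanh (1 - α)`,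
the boundary values are `±(1 - α)`; in particular the first moment is exactly `1`.
-/

open Real intervalIntegral Set

namespace Real

theorem one_sub_tanh_sq (x : ℝ) : 1 - tanh x ^ 2 = 1 / cosh x ^ 2 := by
  have := (cosh_pos x).ne'
  rw [tanh_eq_sinh_div_cosh]
  field_simp
  linarith [cosh_sq_sub_sinh_sq x]

theorem hasDerivAt_tanh (x : ℝ) : HasDerivAt tanh (1 / cosh x ^ 2) x := by
  have h := (hasDerivAt_sinh x).div (hasDerivAt_cosh x) (cosh_pos x).ne'
  rw [show cosh x * cosh x - sinh x * sinh x = 1 by nlinarith [cosh_sq_sub_sinh_sq x]] at h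
  exact (funext tanh_eq_sinh_div_cosh : tanh = _) ▸ h

theorem continuous_inv_cosh_pow (n : ℕ) : Continuous fun u => (1 / cosh u) ^ n :=
  (continuous_const.div continuous_cosh fun u => (cosh_pos u).ne').pow n

theorem integral_inv_cosh_sq (a b : ℝ) :
    ∫ u in a..b, (1 / cosh u) ^ 2 = tanh b - tanh a :=
  integral_eq_sub_of_hasDerivAt (fun u _ => by simpa [div_pow] using hasDerivAt_tanh u)
    ((continuous_inv_cosh_pow 2).intervalIntegrable a b)

theorem integral_inv_cosh_pow_four (a b : ℝ) :
    ∫ u in a..b, (1 / cosh u) ^ 4 = (tanh b - tanh b ^ 3 / 3) - (tanh a - tanh a ^ 3 / 3) := by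
  refine integral_eq_sub_of_hasDerivAt (f := fun u => tanh u - tanh u ^ 3 / 3)
    (fun u _ => ?_) ((continuous_inv_cosh_pow 4).intervalIntegrable a b)
  refine ((hasDerivAt_tanh u).sub ((hasDerivAt_tanh u).pow 3 |>.div_const 3)).congr_deriv ?_
  rw [show (1 / cosh u) ^ 4 = (1 / cosh u ^ 2) ^ 2 by ring, ← one_sub_tanh_sq]
  ring

theorem tanh_half_log_two_sub_div {α : ℝ} (hα : α ∈ Ioo 0 2) :
    tanh (log ((2 - α) / α) / 2) = 1 - α := by
  obtain ⟨hα0, hα2⟩ := hα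
  have h : 1 - α ∈ Ioo (-1) 1 := ⟨by linarith, by linarith⟩
  rw [← tanh_artanh h, artanh_eq_half_log (Ioo_subset_Icc_self h)]
  ring_nf

end Real

theorem intervalIntegral.integral_comp_centered_rescale (f : ℝ → ℝ) {c Δ : ℝ} (hc : c ≠ 0)
    (hΔ : Δ ≠ 0) (m : ℝ) :
    ∫ x in (m - Δ / 2)..(m + Δ / 2), f (c * (x - m) / Δ) =
      Δ / c * ∫ u in (-(c / 2))..(c / 2), f u := by
  have hcm (x : ℝ) : c * (x - m) / Δ = c / Δ * x - c * m / Δ := by ring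
  simp_rw [hcm]
  rw [integral_comp_mul_sub f (div_ne_zero hc hΔ), smul_eq_mul, inv_div]
  congr 2 <;> field_simp <;> ring

theorem dsq_gradient_second_moment_and_variance
    (α Δ m : ℝ) (hα : α ∈ Set.Ioo (0:ℝ) 1) (hΔ : 0 < Δ) :
    ((1 / Δ) * ∫ x in (m - Δ / 2)..(m + Δ / 2),
        (Real.log ((2 - α) / α) / (2 * (1 - α))) ^ 2 *
          (1 / Real.cosh (Real.log ((2 - α) / α) * (x - m) / Δ)) ^ 4 =
      Real.log ((2 - α) / α) * (3 - (1 - α) ^ 2) / (6 * (1 - α))) ∧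
    ((1 / Δ) * (∫ x in (m - Δ / 2)..(m + Δ / 2),
        (Real.log ((2 - α) / α) / (2 * (1 - α))) ^ 2 *
          (1 / Real.cosh (Real.log ((2 - α) / α) * (x - m) / Δ)) ^ 4) -
      ((1 / Δ) * ∫ x in (m - Δ / 2)..(m + Δ / 2),
        (Real.log ((2 - α) / α) / (2 * (1 - α))) *
          (1 / Real.cosh (Real.log ((2 - α) / α) * (x - m) / Δ)) ^ 2) ^ 2 =
      Real.log ((2 - α) / α) * (3 - (1 - α) ^ 2) / (6 * (1 - α)) - 1) := by
  obtain ⟨hα0, hα1⟩ := hα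
  set β := log ((2 - α) / α)
  have hβ : β ≠ 0 := (log_pos <| (one_lt_div hα0).mpr (by linarith)).ne'
  have htanh : tanh (β / 2) = 1 - α := tanh_half_log_two_sub_div ⟨hα0, by linarith⟩
  have hsecond : (1 / Δ) * ∫ x in (m - Δ / 2)..(m + Δ / 2),
      (β / (2 * (1 - α))) ^ 2 * (1 / cosh (β * (x - m) / Δ)) ^ 4 =
        β * (3 - (1 - α) ^ 2) / (6 * (1 - α)) := by
    rw [integral_const_mul, integral_comp_centered_rescale (fun u => (1 / cosh u) ^ 4) hβ hΔ.ne',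
      integral_inv_cosh_pow_four, tanh_neg, htanh]
    field_simp
    ring
  have hfirst : (1 / Δ) * ∫ x in (m - Δ / 2)..(m + Δ / 2),
      (β / (2 * (1 - α))) * (1 / cosh (β * (x - m) / Δ)) ^ 2 = 1 := by
    rw [integral_const_mul, integral_comp_centered_rescale (fun u => (1 / cosh u) ^ 2) hβ hΔ.ne',
      integral_inv_cosh_sq, tanh_neg, htanh]
    field_simp
    ring
  exact ⟨hsecond, by rw [hsecond, hfirst]; ring⟩
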